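/- For even m ≥ 4 and n divisible by m/2, with n' = 2n/m, the Pareto set of the m-objective LOTZ function has cardinality exactly (n' + 1)^(m/2), and the map f restricted to the Pareto set is injective, so the Pareto front also has cardinality (n' + 1)^(m/2). -/
import Mathlib


/-- Bit of `x` at (0-indexed) position `i`, `false` if out of range. -/
def bitAt (n : ℕ) (x : Fin n → Bool) (i : ℕ) : Bool :=
  if h : i < n then x ⟨i, h⟩ else false

/-- Number of leading ones of the substring of `x` of length `len` starting at `start`. -/
def leadOnes (n : ℕ) (x : Fin n → Bool) (start len : ℕ) : ℕ :=
  ((Finset.range len).filter (fun i => ∀ j ≤ i, bitAt n x (start + j) = true)).card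

/-- Number of trailing zeros of the substring of `x` of length `len` starting at `start`. -/
def trailZeros (n : ℕ) (x : Fin n → Bool) (start len : ℕ) : ℕ :=
  ((Finset.range len).filter
    (fun i => ∀ j, i ≤ j → j < len → bitAt n x (start + j) = false)).card

/-- The `m`-objective LOTZ function on bit strings of length `n` (objectives `0`-indexed):
even `k` counts the leading ones of block `k/2`, odd `k` the trailing zeros of that block,
where blocks are consecutive substrings of length `n' = 2n/m`. -/
def mLOTZ (m n : ℕ) (x : Fin n → Bool) (k : Fin m) : ℕ :=
  if k.val % 2 = 0 then leadOnes n x ((k.val / 2) * (2 * n / m)) (2 * n / m)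
  else trailZeros n x ((k.val / 2) * (2 * n / m)) (2 * n / m)

/-- `u` strictly dominates `v`. -/
def StrictDom {m : ℕ} (u v : Fin m → ℕ) : Prop :=
  (∀ i, v i ≤ u i) ∧ ∃ i, v i < u i

/-- `x` is Pareto-optimal for `mLOTZ m n`. -/
def ParetoOpt (m n : ℕ) (x : Fin n → Bool) : Prop :=
  ∀ y : Fin n → Bool, ¬ StrictDom (mLOTZ m n y) (mLOTZ m n x)

section Aux
variable (n : ℕ) (x y : Fin n → Bool) (s l : ℕ)

lemma leadOnes_le : leadOnes n x s l ≤ l :=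
  (Finset.card_filter_le _ _).trans_eq (Finset.card_range l)

lemma trailZeros_le : trailZeros n x s l ≤ l :=
  (Finset.card_filter_le _ _).trans_eq (Finset.card_range l)

lemma lt_leadOnes_iff (i : ℕ) :
    i < leadOnes n x s l ↔ i < l ∧ ∀ j ≤ i, bitAt n x (s + j) = true := by
  set S := (Finset.range l).filter (fun i => ∀ j ≤ i, bitAt n x (s + j) = true) with hS
  have hdc : ∀ a ∈ S, ∀ b ≤ a, b ∈ S := by
    intro a ha b hb
    simp only [hS, Finset.mem_filter, Finset.mem_range] at ha ⊢
    exact ⟨lt_of_le_of_lt hb ha.1, fun j hj => ha.2 j (hj.trans hb)⟩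
  have h1 : ∀ i, i ∈ S → i < S.card := by
    intro i hi
    have hsub : Finset.range (i+1) ⊆ S := by
      intro k hk
      exact hdc i hi k (by have := Finset.mem_range.1 hk; omega)
    have := Finset.card_le_card hsub
    rw [Finset.card_range] at this
    omega
  have h2 : ∀ i, i ∉ S → S.card ≤ i := by
    intro i hi
    have hsub : S ⊆ Finset.range i := by
      intro j hj
      simp only [Finset.mem_range]
      by_contra hc
      exact hi (hdc j hj i (le_of_not_gt hc))
    simpa using Finset.card_le_card hsub
  have key : i ∈ S ↔ i < S.card := by
    constructor
    · exact h1 i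
    · intro h; by_contra hc; exact absurd (h2 i hc) (by omega)
  rw [leadOnes, ← hS, ← key, hS]
  simp [Finset.mem_filter]

lemma trailZeros_iff (i : ℕ) :
    (l - trailZeros n x s l ≤ i ∧ i < l) ↔
      (i < l ∧ ∀ j, i ≤ j → j < l → bitAt n x (s + j) = false) := by
  set S := (Finset.range l).filter
      (fun i => ∀ j, i ≤ j → j < l → bitAt n x (s + j) = false) with hS
  have hSr : S ⊆ Finset.range l := Finset.filter_subset _ _
  have hcard : S.card ≤ l := by simpa using Finset.card_le_card hSr
  have huc : ∀ a ∈ S, ∀ b, a ≤ b → b < l → b ∈ S := by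
    intro a ha b hab hbl
    simp only [hS, Finset.mem_filter, Finset.mem_range] at ha ⊢
    exact ⟨hbl, fun j hj hjl => ha.2 j (hab.trans hj) hjl⟩
  have h1 : ∀ i, i ∈ S → l - S.card ≤ i := by
    intro i hi
    have hil : i < l := by
      have := hSr hi; simpa using this
    have hsub : Finset.Ico i l ⊆ S := by
      intro k hk
      rw [Finset.mem_Ico] at hk
      exact huc i hi k hk.1 hk.2
    have := Finset.card_le_card hsub
    rw [Nat.card_Ico] at this
    omega
  have h2 : ∀ i, i < l → i ∉ S → i < l - S.card := by
    intro i hil hi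
    have hsub : S ⊆ Finset.Ico (i+1) l := by
      intro j hj
      have hjl : j < l := by have := hSr hj; simpa using this
      rw [Finset.mem_Ico]
      refine ⟨?_, hjl⟩
      by_contra hc
      exact hi (huc j hj i (by omega) hil)
    have := Finset.card_le_card hsub
    rw [Nat.card_Ico] at this
    omega
  have key : i ∈ S ↔ (l - S.card ≤ i ∧ i < l) := by
    constructor
    · intro h; exact ⟨h1 i h, by have := hSr h; simpa using this⟩
    · rintro ⟨h, hil⟩; by_contra hc
      exact absurd (h2 i hil hc) (by omega)
  rw [trailZeros, ← hS, ← key, hS]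
  simp [Finset.mem_filter]

lemma leadOnes_spec (i : ℕ) (h : i < leadOnes n x s l) : bitAt n x (s + i) = true :=
  ((lt_leadOnes_iff n x s l i).1 h).2 i le_rfl

lemma trailZeros_spec (i : ℕ) (h1 : l - trailZeros n x s l ≤ i) (h2 : i < l) :
    bitAt n x (s + i) = false :=
  ((trailZeros_iff n x s l i).1 ⟨h1, h2⟩).2 i le_rfl h2

lemma leadOnes_add_trailZeros_le : leadOnes n x s l + trailZeros n x s l ≤ l := by
  by_contra hc
  push_neg at hc
  have h1 : l - trailZeros n x s l < leadOnes n x s l := by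
    have := trailZeros_le n x s l
    omega
  have h2 : l - trailZeros n x s l < l := by
    have := leadOnes_le n x s l
    omega
  have ht := trailZeros_spec n x s l _ le_rfl h2
  have hl := leadOnes_spec n x s l _ h1
  rw [hl] at ht
  exact Bool.noConfusion ht

lemma leadOnes_of_canon (a : ℕ) (ha : a ≤ l)
    (hx : ∀ j < l, bitAt n x (s + j) = decide (j < a)) : leadOnes n x s l = a := by
  rw [leadOnes]
  have : (Finset.range l).filter (fun i => ∀ j ≤ i, bitAt n x (s + j) = true)
      = Finset.range a := by
    ext i
    simp only [Finset.mem_filter, Finset.mem_range]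
    constructor
    · rintro ⟨hil, h⟩
      have := h i le_rfl
      rw [hx i hil] at this
      simpa using this
    · intro hia
      refine ⟨by omega, fun j hj => ?_⟩
      rw [hx j (by omega)]
      simp; omega
  rw [this, Finset.card_range]

lemma trailZeros_of_canon (a : ℕ) (ha : a ≤ l)
    (hx : ∀ j < l, bitAt n x (s + j) = decide (j < a)) : trailZeros n x s l = l - a := by
  rw [trailZeros]
  have : (Finset.range l).filter
      (fun i => ∀ j, i ≤ j → j < l → bitAt n x (s + j) = false) = Finset.Ico a l := by
    ext i
    simp only [Finset.mem_filter, Finset.mem_range, Finset.mem_Ico]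
    constructor
    · rintro ⟨hil, h⟩
      refine ⟨?_, hil⟩
      by_contra hc
      have := h i le_rfl hil
      rw [hx i hil] at this
      simp at this; omega
    · rintro ⟨hai, hil⟩
      refine ⟨hil, fun j hj hjl => ?_⟩
      rw [hx j hjl]
      simp; omega
  rw [this, Nat.card_Ico]

lemma block_canon (h : leadOnes n x s l + trailZeros n x s l = l) :
    ∀ j < l, bitAt n x (s + j) = decide (j < leadOnes n x s l) := by
  intro j hjl
  by_cases hj : j < leadOnes n x s l
  · rw [leadOnes_spec n x s l j hj]; simp [hj]
  · rw [trailZeros_spec n x s l j (by omega) hjl]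
    simp; omega

lemma leadOnes_congr (h : ∀ j < l, bitAt n x (s + j) = bitAt n y (s + j)) :
    leadOnes n x s l = leadOnes n y s l := by
  unfold leadOnes
  congr 1
  apply Finset.filter_congr
  intro i hi
  rw [Finset.mem_range] at hi
  constructor <;> intro hh j hj
  · rw [← h j (by omega)]; exact hh j hj
  · rw [h j (by omega)]; exact hh j hj

lemma trailZeros_congr (h : ∀ j < l, bitAt n x (s + j) = bitAt n y (s + j)) :
    trailZeros n x s l = trailZeros n y s l := by
  unfold trailZeros
  congr 1
  apply Finset.filter_congr
  intro i hi
  constructor <;> intro hh j hj hjl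
  · rw [← h j hjl]; exact hh j hj hjl
  · rw [h j hjl]; exact hh j hj hjl

end Aux

section Blocks

/-- canonical string given per-block numbers of leading ones -/
def canonF (n n' : ℕ) (A : ℕ → ℕ) : Fin n → Bool :=
  fun i => decide ((i : ℕ) % n' < A ((i : ℕ) / n'))

variable {m n p n' : ℕ}

lemma idx_lt (hn : n = p * n') {b j : ℕ} (hb : b < p) (hj : j < n') :
    b * n' + j < n := by
  have h1 : b * n' + j < (b + 1) * n' := by rw [Nat.succ_mul]; omega
  have h2 : (b + 1) * n' ≤ p * n' := Nat.mul_le_mul_right _ hb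
  rw [hn]; omega

lemma div_mod_block {b j : ℕ} (hj : j < n') :
    (b * n' + j) % n' = j ∧ (b * n' + j) / n' = b := by
  have hn' : 0 < n' := by omega
  constructor
  · rw [mul_comm, Nat.mul_add_mod]; exact Nat.mod_eq_of_lt hj
  · rw [add_comm, mul_comm, Nat.add_mul_div_left _ _ hn', Nat.div_eq_of_lt hj]; omega

lemma canonF_bit (hn : n = p * n') (A : ℕ → ℕ) {b j : ℕ} (hb : b < p) (hj : j < n') :
    bitAt n (canonF n n' A) (b * n' + j) = decide (j < A b) := by
  have hlt : b * n' + j < n := idx_lt hn hb hj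
  rw [bitAt, dif_pos hlt]
  show decide ((b * n' + j) % n' < A ((b * n' + j) / n')) = decide (j < A b)
  obtain ⟨h1, h2⟩ := div_mod_block (n' := n') (b := b) hj
  rw [h1, h2]

lemma bitAt_val (x : Fin n → Bool) (i : Fin n) : bitAt n x (i : ℕ) = x i := by
  rw [bitAt, dif_pos i.2]

lemma mLOTZ_even (h2 : 2 * n / m = n') (x : Fin n → Bool) {b : ℕ} (hbm : 2 * b < m) :
    mLOTZ m n x ⟨2 * b, hbm⟩ = leadOnes n x (b * n') n' := by
  show (if (2 * b) % 2 = 0 then leadOnes n x ((2 * b / 2) * (2 * n / m)) (2 * n / m)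
    else trailZeros n x ((2 * b / 2) * (2 * n / m)) (2 * n / m)) = _
  rw [if_pos (by omega : (2 * b) % 2 = 0), h2, show 2 * b / 2 = b by omega]

lemma mLOTZ_odd (h2 : 2 * n / m = n') (x : Fin n → Bool) {b : ℕ} (hbm : 2 * b + 1 < m) :
    mLOTZ m n x ⟨2 * b + 1, hbm⟩ = trailZeros n x (b * n') n' := by
  show (if (2 * b + 1) % 2 = 0 then leadOnes n x (((2 * b + 1) / 2) * (2 * n / m)) (2 * n / m)
    else trailZeros n x (((2 * b + 1) / 2) * (2 * n / m)) (2 * n / m)) = _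
  rw [if_neg (by omega : ¬ (2 * b + 1) % 2 = 0), h2, show (2 * b + 1) / 2 = b by omega]

lemma fin_dec (hm2 : m = 2 * p) (k : Fin m) :
    (∃ b, ∃ h : 2 * b < m, k = ⟨2 * b, h⟩ ∧ b < p)
    ∨ (∃ b, ∃ h : 2 * b + 1 < m, k = ⟨2 * b + 1, h⟩ ∧ b < p) := by
  have hk := k.2
  by_cases hpar : (k : ℕ) % 2 = 0
  · exact Or.inl ⟨(k : ℕ) / 2, by omega,
      Fin.ext (show (k : ℕ) = 2 * ((k : ℕ) / 2) by omega), by omega⟩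
  · exact Or.inr ⟨(k : ℕ) / 2, by omega,
      Fin.ext (show (k : ℕ) = 2 * ((k : ℕ) / 2) + 1 by omega), by omega⟩

lemma pareto_canon (hm2 : m = 2 * p) (hn : n = p * n') (h2 : 2 * n / m = n')
    (A : ℕ → ℕ) (hA : ∀ b, A b ≤ n') : ParetoOpt m n (canonF n n' A) := by
  rintro y ⟨hle, k0, hlt⟩
  have hvL : ∀ b < p, leadOnes n (canonF n n' A) (b * n') n' = A b := fun b hb =>
    leadOnes_of_canon n _ _ _ (A b) (hA b) (fun j hj => canonF_bit hn A hb hj)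
  have hvT : ∀ b < p, trailZeros n (canonF n n' A) (b * n') n' = n' - A b := fun b hb =>
    trailZeros_of_canon n _ _ _ (A b) (hA b) (fun j hj => canonF_bit hn A hb hj)
  have key : ∀ b < p, leadOnes n y (b * n') n' = A b
      ∧ trailZeros n y (b * n') n' = n' - A b := by
    intro b hb
    have e1 := hle ⟨2 * b, by omega⟩
    have e2 := hle ⟨2 * b + 1, by omega⟩
    rw [mLOTZ_even h2, mLOTZ_even h2, hvL b hb] at e1
    rw [mLOTZ_odd h2, mLOTZ_odd h2, hvT b hb] at e2
    have hsum := leadOnes_add_trailZeros_le n y (b * n') n'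
    have := hA b
    omega
  rcases fin_dec hm2 k0 with ⟨b, hbm, rfl, hb⟩ | ⟨b, hbm, rfl, hb⟩
  · rw [mLOTZ_even h2, mLOTZ_even h2, hvL b hb, (key b hb).1] at hlt; omega
  · rw [mLOTZ_odd h2, mLOTZ_odd h2, hvT b hb, (key b hb).2] at hlt; omega

lemma pareto_only_canon (hm2 : m = 2 * p) (hn : n = p * n') (h2 : 2 * n / m = n')
    {x : Fin n → Bool} (hx : ParetoOpt m n x) :
    ∀ b < p, ∀ j < n', bitAt n x (b * n' + j)
      = decide (j < leadOnes n x (b * n') n') := by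
  intro b hb
  apply block_canon
  by_contra hne
  have hlt : leadOnes n x (b * n') n' + trailZeros n x (b * n') n' < n' := by
    have := leadOnes_add_trailZeros_le n x (b * n') n'
    omega
  set L := leadOnes n x (b * n') n' with hL
  have hLn : L ≤ n' := leadOnes_le n x (b * n') n'
  set y : Fin n → Bool := fun i =>
    if (i : ℕ) / n' = b then decide ((i : ℕ) % n' < L) else x i with hy
  have hybit : ∀ j < n', bitAt n y (b * n' + j) = decide (j < L) := by
    intro j hj
    have hlt' : b * n' + j < n := idx_lt hn hb hj
    rw [bitAt, dif_pos hlt']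
    obtain ⟨h1, h2'⟩ := div_mod_block (n' := n') (b := b) hj
    show (if (b * n' + j) / n' = b then decide ((b * n' + j) % n' < L) else _) = _
    rw [if_pos h2', h1]
  have hyother : ∀ b' < p, b' ≠ b → ∀ j < n',
      bitAt n x (b' * n' + j) = bitAt n y (b' * n' + j) := by
    intro b' hb' hne' j hj
    have hlt' : b' * n' + j < n := idx_lt hn hb' hj
    rw [bitAt, bitAt, dif_pos hlt', dif_pos hlt']
    obtain ⟨h1, h2'⟩ := div_mod_block (n' := n') (b := b') hj
    show x _ = (if (b' * n' + j) / n' = b then _ else x _)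
    rw [h2', if_neg hne']
  have hyL : leadOnes n y (b * n') n' = L :=
    leadOnes_of_canon n _ _ _ L hLn hybit
  have hyT : trailZeros n y (b * n') n' = n' - L :=
    trailZeros_of_canon n _ _ _ L hLn hybit
  apply hx y
  constructor
  · intro k
    rcases fin_dec hm2 k with ⟨b', hbm, rfl, hb'⟩ | ⟨b', hbm, rfl, hb'⟩
    · rw [mLOTZ_even h2, mLOTZ_even h2]
      by_cases hbb : b' = b
      · subst hbb; omega
      · rw [leadOnes_congr n x y _ _ (hyother b' hb' hbb)]
    · rw [mLOTZ_odd h2, mLOTZ_odd h2]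
      by_cases hbb : b' = b
      · subst hbb; rw [hyT]; omega
      · rw [trailZeros_congr n x y _ _ (hyother b' hb' hbb)]
  · refine ⟨⟨2 * b + 1, by omega⟩, ?_⟩
    rw [mLOTZ_odd h2, mLOTZ_odd h2, hyT]
    omega

end Blocks

/-- the Pareto set of `m`-objective LOTZ has cardinality `(n'+1)^(m/2)`
with `n' = 2n/m`, `mLOTZ` is injective on it, and hence the Pareto front (its image)
also has cardinality `(n'+1)^(m/2)`. -/
theorem stmt1 (m n : ℕ) (hm : Even m) (hm4 : 4 ≤ m) (hdvd : m / 2 ∣ n) :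
    {x : Fin n → Bool | ParetoOpt m n x}.ncard = (2 * n / m + 1) ^ (m / 2)
    ∧ Set.InjOn (mLOTZ m n) {x : Fin n → Bool | ParetoOpt m n x}
    ∧ ((mLOTZ m n) '' {x : Fin n → Bool | ParetoOpt m n x}).ncard
        = (2 * n / m + 1) ^ (m / 2) := by
  obtain ⟨p, hp⟩ := hm
  have hm2 : m = 2 * p := by omega
  have hmdiv : m / 2 = p := by omega
  obtain ⟨n', hn⟩ := hdvd
  rw [hmdiv] at hn
  have h2 : 2 * n / m = n' := by
    rw [hm2, hn, show 2 * (p * n') = (2 * p) * n' by ring,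
      Nat.mul_div_cancel_left _ (by omega : 0 < 2 * p)]
  set c : (Fin p → Fin (n' + 1)) → (Fin n → Bool) := fun a =>
    canonF n n' (fun b => if h : b < p then (a ⟨b, h⟩ : ℕ) else 0) with hc
  have hA : ∀ a : Fin p → Fin (n' + 1), ∀ b,
      (if h : b < p then (a ⟨b, h⟩ : ℕ) else 0) ≤ n' := by
    intro a b
    by_cases h : b < p
    · rw [dif_pos h]; have := (a ⟨b, h⟩).2; omega
    · rw [dif_neg h]; omega
  have hLOc : ∀ (a : Fin p → Fin (n' + 1)) (b : Fin p),
      leadOnes n (c a) ((b : ℕ) * n') n' = (a b : ℕ) := by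
    intro a b
    rw [show ((a b : ℕ)) = (if h : (b : ℕ) < p then (a ⟨(b : ℕ), h⟩ : ℕ) else 0) by
      rw [dif_pos b.2]]
    exact leadOnes_of_canon n _ _ _ _ (hA a _) (fun j hj => canonF_bit hn _ b.2 hj)
  have hset : {x : Fin n → Bool | ParetoOpt m n x} = c '' Set.univ := by
    ext x
    simp only [Set.mem_setOf_eq, Set.image_univ, Set.mem_range]
    constructor
    · intro hx
      have hblocks := pareto_only_canon hm2 hn h2 hx
      have hle' : ∀ b : ℕ, leadOnes n x (b * n') n' < n' + 1 := fun b => by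
        have := leadOnes_le n x (b * n') n'; omega
      refine ⟨fun b => ⟨leadOnes n x ((b : ℕ) * n') n', hle' _⟩, ?_⟩
      funext i
      have hiv : (i : ℕ) < n := i.2
      have hn'pos : 0 < n' := by
        rcases Nat.eq_zero_or_pos n' with h | h
        · rw [h, Nat.mul_zero] at hn; omega
        · exact h
      have hb : (i : ℕ) / n' < p := by
        rw [Nat.div_lt_iff_lt_mul hn'pos]; exact hiv.trans_eq hn
      have hj : (i : ℕ) % n' < n' := Nat.mod_lt _ hn'pos
      have hidx : ((i : ℕ) / n') * n' + (i : ℕ) % n' = (i : ℕ) := by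
        rw [mul_comm]; exact Nat.div_add_mod _ _
      have hxb := hblocks ((i : ℕ) / n') hb ((i : ℕ) % n') hj
      have hcb : bitAt n (canonF n n'
            (fun b' => if h : b' < p then
              ((⟨leadOnes n x (b' * n') n', hle' b'⟩ : Fin (n' + 1)) : ℕ) else 0))
          (((i : ℕ) / n') * n' + (i : ℕ) % n')
          = decide ((i : ℕ) % n' < (if h : ((i : ℕ) / n') < p then
              ((⟨leadOnes n x (((i : ℕ) / n') * n') n', hle' _⟩ : Fin (n' + 1)) : ℕ)
              else 0)) :=
        canonF_bit hn _ hb hj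
      rw [hidx] at hcb hxb
      rw [dif_pos hb] at hcb
      exact ((bitAt_val _ i).symm.trans (hcb.trans hxb.symm)).trans (bitAt_val x i)
    · rintro ⟨a, rfl⟩
      exact pareto_canon hm2 hn h2 _ (hA a)
  have hcinj : Function.Injective c := by
    intro a a' hEq
    funext b
    have e1 := hLOc a b
    have e2 := hLOc a' b
    rw [hEq] at e1
    exact Fin.ext (by omega)
  have hinj : Set.InjOn (mLOTZ m n) {x : Fin n → Bool | ParetoOpt m n x} := by
    rw [hset]
    rintro _ ⟨a, -, rfl⟩ _ ⟨a', -, rfl⟩ hEq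
    apply congrArg c
    funext b
    have hbm1 : 2 * (b : ℕ) < m := by have := b.2; omega
    have key := congrFun hEq ⟨2 * (b : ℕ), hbm1⟩
    rw [mLOTZ_even h2, mLOTZ_even h2, hLOc a b, hLOc a' b] at key
    exact Fin.ext key
  have hcard : {x : Fin n → Bool | ParetoOpt m n x}.ncard = (n' + 1) ^ p := by
    rw [hset, Set.ncard_image_of_injective _ hcinj, Set.ncard_univ,
      Nat.card_eq_fintype_card]
    simp [Fintype.card_fun]
  refine ⟨by rw [hmdiv, h2]; exact hcard, hinj, ?_⟩
  rw [Set.ncard_image_of_injOn hinj, hmdiv, h2]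
  exact hcard
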